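/- Let (A,◁,▷) be a pre-Novikov algebra and (B,⋄,(·,·)) a finite-dimensional quadratic right Novikov algebra over a field k of characteristic 0, and let (L := A⊗B, ∘) be the induced pre-Lie algebra, i.e. (a⊗x)∘(b⊗y) = (a▷b)⊗(x⋄y) − (b◁a)⊗(y⋄x). Let r = Σ_α x_α⊗y_α ∈ A⊗A be a symmetric solution of the pre-Novikov Yang–Baxter equation in (A,◁,▷), and set α_r(a) := (L∘(a)⊗id + id⊗(L▷+R◁)(a))(τr), β_r(a) := −(L▷(a)⊗id + id⊗(L∘+R∘)(a))(r). Let {e_p} be a basis of B, {f_p} the dual basis with respect to (·,·), r_L := Σ_p Σ_α (x_α⊗e_p)⊗(y_α⊗f_p) ∈ L⊗L, and let Δ : B → B⊗B be the unique linear map with (Δ(x), y⊗z)₂ = (x, y⋄z) (where (u₁⊗u₂, y⊗z)₂ := (u₁,y)(u₂,z)). Then for all a ∈ A and x ∈ B: (L∘(a⊗x)⊗id + id⊗(L∘(a⊗x)−R∘(a⊗x)))(r_L) = β_r(a)•Δ(x) − (τα_r(a))•(τΔ(x)); that is, the pre-Lie coproduct on L obtained from r_L coincides with the one obtained from the pre-Novikov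 bialgebra structure (α_r, β_r) on A. -/

import Mathlib

open TensorProduct

noncomputable section

variable {k : Type*} [Field k]
section AlgDefs
variable {A : Type*} [AddCommGroup A] [Module k A]

/-- A pre-Lie algebra structure: `(a∘b)∘c − a∘(b∘c) = (b∘a)∘c − b∘(a∘c)`. -/
def IsPreLie (op : A →ₗ[k] A →ₗ[k] A) : Prop :=
  ∀ a b c : A, op (op a b) c - op a (op b c) = op (op b a) c - op b (op a c)

/-- A Novikov algebra: a pre-Lie algebra with `(a∘b)∘c = (a∘c)∘b`. -/
def IsNovikov (op : A →ₗ[k] A →ₗ[k] A) : Prop :=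
  IsPreLie op ∧ ∀ a b c : A, op (op a b) c = op (op a c) b

/-- A pre-Novikov algebra with operations `l = ◁` and `r = ▷`,
writing `a∘b := a◁b + a▷b`. -/
def IsPreNovikov (l r : A →ₗ[k] A →ₗ[k] A) : Prop :=
  (∀ a b c : A, r a (r b c) = r (l a b + r a b) c + r b (r a c) - r (l b a + r b a) c) ∧
  (∀ a b c : A, r a (l b c) = l (r a b) c + l b (l a c + r a c) - l (l b a) c) ∧
  (∀ a b c : A, r (l a b + r a b) c = l (r a c) b) ∧
  (∀ a b c : A, l (l a b) c = l (l a c) b)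

/-- A right Novikov algebra. -/
def IsRightNovikov (d : A →ₗ[k] A →ₗ[k] A) : Prop :=
  (∀ x y z : A, d (d x y) z - d x (d y z) = d (d x z) y - d x (d z y)) ∧
  (∀ x y z : A, d x (d y z) = d y (d x z))

/-- A right Novikov dialgebra with operations `dl = ⊣` and `dr = ⊢`. -/
def IsRightNovikovDialgebra (dl dr : A →ₗ[k] A →ₗ[k] A) : Prop :=
  (∀ x y z : A, dr x (dr y z) = dr y (dr x z)) ∧
  (∀ x y z : A, dr x (dl y z) = dl y (dl x z)) ∧
  (∀ x y z : A, dr (dr x y - dl x y) z = 0) ∧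
  (∀ x y z : A, dl x (dr y z - dl y z) = 0) ∧
  (∀ x y z : A, dr x (dr y z - dl z y) = dr (dr x y) z - dl (dr x z) y) ∧
  (∀ x y z : A, dl x (dr y z - dl z y) = dl (dl x y) z - dl (dl x z) y)

/-- A quadratic right Novikov algebra: a right Novikov algebra with a symmetric
nondegenerate bilinear form satisfying `(x⋄y,z) = −(x, y⋄z + z⋄y)`. -/
def IsQuadraticRightNovikov (d : A →ₗ[k] A →ₗ[k] A) (bf : A →ₗ[k] A →ₗ[k] k) : Prop :=
  IsRightNovikov d ∧ (∀ x y : A, bf x y = bf y x) ∧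
  (∀ x : A, (∀ y : A, bf x y = 0) → x = 0) ∧
  (∀ x y z : A, bf (d x y) z = - bf x (d y z + d z y))

/-- A quadratic pre-Lie algebra: a pre-Lie algebra with a skew-symmetric nondegenerate
bilinear form satisfying `ω(u∘v,w) = −ω(v, u∘w − w∘u)`. -/
def IsQuadraticPreLie (op : A →ₗ[k] A →ₗ[k] A) (w : A →ₗ[k] A →ₗ[k] k) : Prop :=
  IsPreLie op ∧ (∀ u v : A, w u v = - w v u) ∧
  (∀ u : A, (∀ v : A, w u v = 0) → u = 0) ∧
  (∀ u v x : A, w (op u v) x = - w v (op u x - op x u))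

end AlgDefs
section CoDefs
variable {A : Type*} [AddCommGroup A] [Module k A]

/-- `(f ⊗ id)` on `A⊗A`, landing in `A⊗(A⊗A)` via the associator. -/
def lmap3 (f : A →ₗ[k] A ⊗[k] A) : A ⊗[k] A →ₗ[k] A ⊗[k] (A ⊗[k] A) :=
  (TensorProduct.assoc k A A A).toLinearMap ∘ₗ TensorProduct.map f LinearMap.id

/-- `(id ⊗ f)` on `A⊗A`, landing in `A⊗(A⊗A)`. -/
def rmap3 (f : A →ₗ[k] A ⊗[k] A) : A ⊗[k] A →ₗ[k] A ⊗[k] (A ⊗[k] A) :=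
  TensorProduct.map LinearMap.id f

/-- `τ ⊗ id` on the triple tensor product `A⊗(A⊗A)`: `a⊗(b⊗c) ↦ b⊗(a⊗c)`. -/
def swap12 : A ⊗[k] (A ⊗[k] A) →ₗ[k] A ⊗[k] (A ⊗[k] A) :=
  (TensorProduct.assoc k A A A).toLinearMap ∘ₗ
    TensorProduct.map (TensorProduct.comm k A A).toLinearMap LinearMap.id ∘ₗ
    (TensorProduct.assoc k A A A).symm.toLinearMap

/-- `id ⊗ τ` on the triple tensor product `A⊗(A⊗A)`: `a⊗(b⊗c) ↦ a⊗(c⊗b)`. -/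
def swap23 : A ⊗[k] (A ⊗[k] A) →ₗ[k] A ⊗[k] (A ⊗[k] A) :=
  TensorProduct.map LinearMap.id (TensorProduct.comm k A A).toLinearMap

/-- The flip `τ` on `A ⊗ A`. -/
def tau2 : A ⊗[k] A →ₗ[k] A ⊗[k] A := (TensorProduct.comm k A A).toLinearMap

/-- A pre-Novikov coalgebra `(A, α, β)`. -/
def IsPreNovikovCoalgebra (α β : A →ₗ[k] A ⊗[k] A) : Prop :=
  (∀ a : A, lmap3 α (α a) + swap12 (rmap3 α (β a)) - rmap3 (α + β) (α a)
      - swap12 (lmap3 β (α a)) = 0) ∧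
  (∀ a : A, rmap3 β (β a) + swap12 (lmap3 (α + β) (β a)) - lmap3 (α + β) (β a)
      - swap12 (rmap3 β (β a)) = 0) ∧
  (∀ a : A, swap23 (lmap3 β (α a)) - lmap3 (α + β) (β a) = 0) ∧
  (∀ a : A, swap23 (lmap3 α (α a)) - lmap3 α (α a) = 0)

/-- A right Novikov co-dialgebra `(B, Δα, Δβ)` (denoted `(A, Da, Db)` here). -/
def IsRightNovikovCoDialgebra (Da Db : A →ₗ[k] A ⊗[k] A) : Prop :=
  (∀ x : A, rmap3 Db (Db x) = swap12 (rmap3 Db (Db x))) ∧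
  (∀ x : A, rmap3 Da (Db x) = swap12 (rmap3 Da (Da x))) ∧
  (∀ x : A, lmap3 Db (Db x) = lmap3 Da (Db x)) ∧
  (∀ x : A, rmap3 Db (Da x) = rmap3 Da (Da x)) ∧
  (∀ x : A, rmap3 Db (Db x) - swap23 (rmap3 Da (Db x))
      = lmap3 Db (Db x) - swap23 (lmap3 Db (Da x))) ∧
  (∀ x : A, rmap3 Db (Da x) - swap23 (rmap3 Da (Da x))
      = lmap3 Da (Da x) - swap23 (lmap3 Da (Da x)))

/-- A pre-Lie coalgebra `(L, δ)`. -/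
def IsPreLieCoalgebra (δ : A →ₗ[k] A ⊗[k] A) : Prop :=
  ∀ a : A, rmap3 δ (δ a) - swap12 (rmap3 δ (δ a)) = lmap3 δ (δ a) - swap12 (lmap3 δ (δ a))

/-- A right Novikov coalgebra `(B, Δ)`. -/
def IsRightNovikovCoalgebra (Δ : A →ₗ[k] A ⊗[k] A) : Prop :=
  (∀ x : A, lmap3 Δ (Δ x) - swap23 (lmap3 Δ (Δ x))
      = rmap3 Δ (Δ x) - swap23 (rmap3 Δ (Δ x))) ∧
  (∀ x : A, rmap3 Δ (Δ x) = swap12 (rmap3 Δ (Δ x)))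

end CoDefs
section YBE
variable {A : Type*} [AddCommGroup A] [Module k A]

/-- `(x⊗y)⊗(x'⊗y') ↦ μ(x,x') ⊗ y ⊗ y'` (the "12·13" product). -/
def m1213 (μ : A →ₗ[k] A →ₗ[k] A) :
    (A ⊗[k] A) ⊗[k] (A ⊗[k] A) →ₗ[k] A ⊗[k] (A ⊗[k] A) :=
  TensorProduct.map (TensorProduct.lift μ) LinearMap.id ∘ₗ
    (TensorProduct.tensorTensorTensorComm k A A A A).toLinearMap

/-- `(x⊗y)⊗(x'⊗y') ↦ x ⊗ μ(y,x') ⊗ y'` (the "12·23" product). -/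
def m1223 (μ : A →ₗ[k] A →ₗ[k] A) :
    (A ⊗[k] A) ⊗[k] (A ⊗[k] A) →ₗ[k] A ⊗[k] (A ⊗[k] A) :=
  TensorProduct.map LinearMap.id
      (TensorProduct.map (TensorProduct.lift μ) LinearMap.id ∘ₗ
        (TensorProduct.assoc k A A A).symm.toLinearMap) ∘ₗ
    (TensorProduct.assoc k A A (A ⊗[k] A)).toLinearMap

/-- `(x⊗y)⊗(x'⊗y') ↦ x ⊗ x' ⊗ μ(y,y')` (the "13·23" product). -/
def m1323 (μ : A →ₗ[k] A →ₗ[k] A) :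
    (A ⊗[k] A) ⊗[k] (A ⊗[k] A) →ₗ[k] A ⊗[k] (A ⊗[k] A) :=
  (TensorProduct.assoc k A A A).toLinearMap ∘ₗ
    TensorProduct.map LinearMap.id (TensorProduct.lift μ) ∘ₗ
    (TensorProduct.tensorTensorTensorComm k A A A A).toLinearMap

/-- `(x⊗y)⊗(x'⊗y') ↦ x' ⊗ x ⊗ μ(y,y')` (the "23·13" product). -/
def m2313 (μ : A →ₗ[k] A →ₗ[k] A) :
    (A ⊗[k] A) ⊗[k] (A ⊗[k] A) →ₗ[k] A ⊗[k] (A ⊗[k] A) :=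
  (TensorProduct.assoc k A A A).toLinearMap ∘ₗ
    TensorProduct.map (TensorProduct.comm k A A).toLinearMap (TensorProduct.lift μ) ∘ₗ
    (TensorProduct.tensorTensorTensorComm k A A A A).toLinearMap

/-- `ρ` is a solution of the pre-Novikov Yang–Baxter equation
`r₁₂∘r₁₃ + r₂₃⊙r₁₃ − r₁₂◁r₂₃ = 0` in the pre-Novikov algebra `(A, l, r)`,
where `a∘b = a◁b + a▷b` and `a⊙b = a▷b + b◁a`. -/
def IsPNYBESolution (l r : A →ₗ[k] A →ₗ[k] A) (ρ : A ⊗[k] A) : Prop :=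
  m1213 (l + r) (ρ ⊗ₜ[k] ρ) + m2313 (r + l.flip) (ρ ⊗ₜ[k] ρ) - m1223 l (ρ ⊗ₜ[k] ρ) = 0

/-- `ρ` is a solution of the S-equation `−r₁₂∘r₁₃ + r₁₂∘r₂₃ + [r₁₃, r₂₃] = 0`
in the pre-Lie algebra `(A, op)`. -/
def IsSEquationSolution (op : A →ₗ[k] A →ₗ[k] A) (ρ : A ⊗[k] A) : Prop :=
  - m1213 op (ρ ⊗ₜ[k] ρ) + m1223 op (ρ ⊗ₜ[k] ρ) + m1323 (op - op.flip) (ρ ⊗ₜ[k] ρ) = 0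

end YBE

/-!
Identities in `B ⊗ B` are checked against the pairings with `y ⊗ z`, which separate points
because `f` is dual to the basis `e`. For the canonical tensor `C = Σ e_p ⊗ f_p`, `(φ ⊗ id) C`
pairs with `y ⊗ z` to `(φ z, y)`; invariance of the form then gives `(L⋄(x) ⊗ id) C = −(Δx + τΔx)`
and `(R⋄(x) ⊗ id) C = τΔx`, and the symmetry `τC = C` moves these maps to the second factor.
As `r_L` is the image of `r ⊗ C`, both sides of the claim become combinations of tensors
`(maps applied to r) ⊗ Δx` and `(maps applied to r) ⊗ τΔx`, which agree once `τr = r`.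
-/

lemma tau2_tau2 {A : Type*} [AddCommGroup A] [Module k A] (w : A ⊗[k] A) : tau2 (tau2 w) = w :=
  TensorProduct.comm_comm k A A w

lemma tau2_map {A : Type*} [AddCommGroup A] [Module k A] (F G : A →ₗ[k] A) (w : A ⊗[k] A) :
    tau2 (TensorProduct.map F G w) = TensorProduct.map G F (tau2 w) :=
  (TensorProduct.map_comm G F w).symm

section DualBasis

variable {B ι : Type*} [AddCommGroup B] [Module k B] [Fintype ι] [DecidableEq ι]
  {bf : B →ₗ[k] B →ₗ[k] k} {e : Module.Basis ι k B} {f : ι → B}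

/-- The form `(·,·)₂` on `B ⊗ B` paired with `y ⊗ z`: `u₁ ⊗ u₂ ↦ (u₁, y) (u₂, z)`. -/
def tensorPairing (bf : B →ₗ[k] B →ₗ[k] k) (y z : B) : B ⊗[k] B →ₗ[k] k :=
  (TensorProduct.lid k k).toLinearMap ∘ₗ TensorProduct.map (bf.flip y) (bf.flip z)

@[simp]
lemma tensorPairing_tmul (y z b c : B) : tensorPairing bf y z (b ⊗ₜ c) = bf b y * bf c z := by
  simp [tensorPairing]

lemma tensorPairing_tau2 (y z : B) (w : B ⊗[k] B) :
    tensorPairing bf y z (tau2 w) = tensorPairing bf z y w := by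
  induction w using TensorProduct.induction_on with
  | zero => simp
  | tmul b c => simp [tau2, mul_comm]
  | add w w' hw hw' => simp only [map_add, hw, hw']

lemma repr_eq_of_dual (hdual : ∀ p q, bf (e p) (f q) = if p = q then 1 else 0)
    (z : B) (p : ι) : e.repr z p = bf z (f p) := by
  conv_rhs => rw [← e.sum_repr z]
  simp only [map_sum, map_smul, LinearMap.sum_apply, LinearMap.smul_apply, hdual, smul_eq_mul,
    mul_ite, mul_one, mul_zero, Finset.sum_ite_eq', Finset.mem_univ, if_true]

lemma sum_dual_smul (hdual : ∀ p q, bf (e p) (f q) = if p = q then 1 else 0) (z : B) :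
    ∑ p, bf z (f p) • e p = z := by
  simp_rw [← repr_eq_of_dual hdual]
  exact e.sum_repr z

lemma tensorProduct_repr_eq_tensorPairing
    (hdual : ∀ p q, bf (e p) (f q) = if p = q then 1 else 0) (w : B ⊗[k] B) (u v : ι) :
    (e.tensorProduct e).repr w (u, v) = tensorPairing bf (f u) (f v) w := by
  induction w using TensorProduct.induction_on with
  | zero => simp
  | tmul b c => simp [repr_eq_of_dual hdual, mul_comm]
  | add w w' hw hw' => simp only [map_add, Finsupp.add_apply, hw, hw']

/-- Testing against `f u ⊗ f v` reads off the coordinates in the basis `e p ⊗ e q`. -/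
lemma eq_of_tensorPairing_eq (hdual : ∀ p q, bf (e p) (f q) = if p = q then 1 else 0)
    {w w' : B ⊗[k] B} (h : ∀ y z, tensorPairing bf y z w = tensorPairing bf y z w') :
    w = w' :=
  (e.tensorProduct e).ext_elem fun ⟨u, v⟩ => by
    rw [tensorProduct_repr_eq_tensorPairing hdual, tensorProduct_repr_eq_tensorPairing hdual, h]

variable (e f) in
def dualTensor : B ⊗[k] B := ∑ p, e p ⊗ₜ f p

lemma tensorPairing_map_dualTensor (hsymm : ∀ y z, bf y z = bf z y)
    (hdual : ∀ p q, bf (e p) (f q) = if p = q then 1 else 0) (φ : B →ₗ[k] B) (y z : B) :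
    tensorPairing bf y z (TensorProduct.map φ LinearMap.id (dualTensor e f)) = bf (φ z) y :=
  calc tensorPairing bf y z (TensorProduct.map φ LinearMap.id (dualTensor e f))
      = ∑ p, bf z (f p) * bf (φ (e p)) y := by
        simp [dualTensor, hsymm (f _) z, mul_comm]
    _ = bf (φ (∑ p, bf z (f p) • e p)) y := by simp
    _ = bf (φ z) y := by rw [sum_dual_smul hdual]

lemma tau2_dualTensor (hsymm : ∀ y z, bf y z = bf z y)
    (hdual : ∀ p q, bf (e p) (f q) = if p = q then 1 else 0) :
    tau2 (dualTensor e f) = dualTensor e f := by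
  have h := tensorPairing_map_dualTensor hsymm hdual LinearMap.id
  simp only [TensorProduct.map_id, LinearMap.id_apply] at h
  refine eq_of_tensorPairing_eq hdual fun y z => ?_
  rw [tensorPairing_tau2, h, h, hsymm]

lemma map_id_dualTensor (hsymm : ∀ y z, bf y z = bf z y)
    (hdual : ∀ p q, bf (e p) (f q) = if p = q then 1 else 0) (φ : B →ₗ[k] B) :
    TensorProduct.map LinearMap.id φ (dualTensor e f)
      = tau2 (TensorProduct.map φ LinearMap.id (dualTensor e f)) := by
  conv_lhs => rw [← tau2_dualTensor hsymm hdual]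
  exact TensorProduct.map_comm _ _ _

end DualBasis

section QuadraticRightNovikov

variable {B ι : Type*} [AddCommGroup B] [Module k B] [Fintype ι] [DecidableEq ι]
  {d : B →ₗ[k] B →ₗ[k] B} {bf : B →ₗ[k] B →ₗ[k] k} {e : Module.Basis ι k B} {f : ι → B}
  {Δ : B →ₗ[k] B ⊗[k] B}

lemma bf_d_apply_comm (hsymm : ∀ y z, bf y z = bf z y)
    (hinv : ∀ x y z, bf (d x y) z = -bf x (d y z + d z y)) (x y z : B) :
    bf (d z x) y = bf x (d z y) := by
  have h₁ := hinv y z x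
  have h₂ := hinv x z y
  rw [map_add] at h₁ h₂
  linear_combination hsymm (d z x) y + h₁ - hsymm (d y z) x - hsymm y (d x z) - h₂

lemma map_d_dualTensor (hsymm : ∀ y z, bf y z = bf z y)
    (hinv : ∀ x y z, bf (d x y) z = -bf x (d y z + d z y))
    (hdual : ∀ p q, bf (e p) (f q) = if p = q then 1 else 0)
    (hΔ : ∀ x y z, tensorPairing bf y z (Δ x) = bf x (d y z)) (x : B) :
    TensorProduct.map (d x) LinearMap.id (dualTensor e f) = -(Δ x + tau2 (Δ x)) := by
  refine eq_of_tensorPairing_eq hdual fun y z => ?_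
  simp only [tensorPairing_map_dualTensor hsymm hdual, hinv, map_neg, map_add, tensorPairing_tau2,
    hΔ]
  ring

lemma map_flip_d_dualTensor (hsymm : ∀ y z, bf y z = bf z y)
    (hinv : ∀ x y z, bf (d x y) z = -bf x (d y z + d z y))
    (hdual : ∀ p q, bf (e p) (f q) = if p = q then 1 else 0)
    (hΔ : ∀ x y z, tensorPairing bf y z (Δ x) = bf x (d y z)) (x : B) :
    TensorProduct.map (d.flip x) LinearMap.id (dualTensor e f) = tau2 (Δ x) := by
  refine eq_of_tensorPairing_eq hdual fun y z => ?_
  rw [tensorPairing_map_dualTensor hsymm hdual, tensorPairing_tau2, hΔ, LinearMap.flip_apply,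
    bf_d_apply_comm hsymm hinv]

end QuadraticRightNovikov

section MixedTensor

variable {A B : Type*} [AddCommGroup A] [Module k A] [AddCommGroup B] [Module k B]

lemma sum_sum_tmul_eq_tensorTensorTensorComm {σ ι : Type*} [Fintype σ] [Fintype ι]
    (xs ys : σ → A) (es fs : ι → B) :
    ∑ p, ∑ i, (xs i ⊗ₜ[k] es p) ⊗ₜ[k] (ys i ⊗ₜ[k] fs p)
      = TensorProduct.tensorTensorTensorComm k A A B B
          ((∑ i, xs i ⊗ₜ[k] ys i) ⊗ₜ[k] ∑ p, es p ⊗ₜ[k] fs p) := by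
  simp only [TensorProduct.sum_tmul, TensorProduct.tmul_sum, map_sum,
    TensorProduct.tensorTensorTensorComm_tmul]

variable {l r : A →ₗ[k] A →ₗ[k] A} {d : B →ₗ[k] B →ₗ[k] B}
  {op : A ⊗[k] B →ₗ[k] A ⊗[k] B →ₗ[k] A ⊗[k] B}

lemma map_leftMul_comp_tensorTensorTensorComm
    (hop : ∀ (a b : A) (x y : B),
      op (a ⊗ₜ[k] x) (b ⊗ₜ[k] y) = r a b ⊗ₜ[k] d x y - l b a ⊗ₜ[k] d y x) (a : A) (x : B) :
    TensorProduct.map (op (a ⊗ₜ[k] x)) LinearMap.id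
        ∘ₗ (TensorProduct.tensorTensorTensorComm k A A B B).toLinearMap
      = (TensorProduct.tensorTensorTensorComm k A A B B).toLinearMap
        ∘ₗ (TensorProduct.map (TensorProduct.map (r a) LinearMap.id)
              (TensorProduct.map (d x) LinearMap.id)
          - TensorProduct.map (TensorProduct.map (l.flip a) LinearMap.id)
              (TensorProduct.map (d.flip x) LinearMap.id)) :=
  TensorProduct.ext_fourfold' fun _ _ _ _ => by simp [hop, TensorProduct.sub_tmul]

lemma map_leftMul_sub_rightMul_comp_tensorTensorTensorComm
    (hop : ∀ (a b : A) (x y : B),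
      op (a ⊗ₜ[k] x) (b ⊗ₜ[k] y) = r a b ⊗ₜ[k] d x y - l b a ⊗ₜ[k] d y x) (a : A) (x : B) :
    TensorProduct.map LinearMap.id (op (a ⊗ₜ[k] x) - op.flip (a ⊗ₜ[k] x))
        ∘ₗ (TensorProduct.tensorTensorTensorComm k A A B B).toLinearMap
      = (TensorProduct.tensorTensorTensorComm k A A B B).toLinearMap
        ∘ₗ (TensorProduct.map (TensorProduct.map LinearMap.id (l a + r a))
              (TensorProduct.map LinearMap.id (d x))
          - TensorProduct.map (TensorProduct.map LinearMap.id (l.flip a + r.flip a))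
              (TensorProduct.map LinearMap.id (d.flip x))) :=
  TensorProduct.ext_fourfold' fun _ _ _ _ => by
    simp only [LinearMap.comp_apply, LinearMap.sub_apply, LinearMap.add_apply,
      LinearEquiv.coe_coe, TensorProduct.tensorTensorTensorComm_tmul, TensorProduct.map_tmul,
      LinearMap.id_apply, LinearMap.flip_apply, hop, map_add, map_sub, TensorProduct.tmul_sub,
      TensorProduct.add_tmul, TensorProduct.tmul_add]
    abel

end MixedTensor

theorem coproducts_coincide_general (k A B ι σ : Type*) [Field k]
    [AddCommGroup A] [Module k A] [AddCommGroup B] [Module k B]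
    [Fintype ι] [DecidableEq ι] [Fintype σ]
    (l r : A →ₗ[k] A →ₗ[k] A)
    (d : B →ₗ[k] B →ₗ[k] B) (bf : B →ₗ[k] B →ₗ[k] k)
    (hq : IsQuadraticRightNovikov d bf)
    (op : A ⊗[k] B →ₗ[k] A ⊗[k] B →ₗ[k] A ⊗[k] B)
    (hop : ∀ (a b : A) (x y : B),
      op (a ⊗ₜ[k] x) (b ⊗ₜ[k] y) = r a b ⊗ₜ[k] d x y - l b a ⊗ₜ[k] d y x)
    (ρ : A ⊗[k] A) (xs ys : σ → A) (hρ : ρ = ∑ i : σ, xs i ⊗ₜ[k] ys i)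
    (hsym : tau2 ρ = ρ)
    (αr βr : A →ₗ[k] A ⊗[k] A)
    (hαr : ∀ a : A, αr a = TensorProduct.map ((l + r) a) LinearMap.id (tau2 ρ)
        + TensorProduct.map LinearMap.id (r a + l.flip a) (tau2 ρ))
    (hβr : ∀ a : A, βr a = -(TensorProduct.map (r a) LinearMap.id ρ
        + TensorProduct.map LinearMap.id ((l + r) a + (l + r).flip a) ρ))
    (e : Module.Basis ι k B) (f : ι → B)
    (hdual : ∀ p q : ι, bf (e p) (f q) = if p = q then (1:k) else 0)
    (rL : (A ⊗[k] B) ⊗[k] (A ⊗[k] B))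
    (hrL : rL = ∑ p : ι, ∑ i : σ, (xs i ⊗ₜ[k] e p) ⊗ₜ[k] (ys i ⊗ₜ[k] f p))
    (Δ : B →ₗ[k] B ⊗[k] B)
    (hΔ : ∀ x y z : B,
      TensorProduct.lid k k (TensorProduct.map (bf.flip y) (bf.flip z) (Δ x))
        = bf x (d y z)) :
    ∀ (a : A) (x : B),
      TensorProduct.map (op (a ⊗ₜ[k] x)) LinearMap.id rL
          + TensorProduct.map LinearMap.id
              (op (a ⊗ₜ[k] x) - op.flip (a ⊗ₜ[k] x)) rL
        = (TensorProduct.tensorTensorTensorComm k A A B B).toLinearMap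
              (βr a ⊗ₜ[k] Δ x)
          - (TensorProduct.tensorTensorTensorComm k A A B B).toLinearMap
              (tau2 (αr a) ⊗ₜ[k] tau2 (Δ x)) := by
  obtain ⟨-, hsymm, -, hinv⟩ := hq
  intro a x
  have hrL_eq : rL = TensorProduct.tensorTensorTensorComm k A A B B (ρ ⊗ₜ dualTensor e f) := by
    rw [hrL, hρ, sum_sum_tmul_eq_tensorTensorTensorComm, dualTensor]
  have hτα : tau2 (αr a) = TensorProduct.map LinearMap.id ((l + r) a) ρ
      + TensorProduct.map (r a + l.flip a) LinearMap.id ρ := by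
    rw [hαr, hsym, map_add, tau2_map, tau2_map, hsym]
  rw [hrL_eq, ← LinearEquiv.coe_coe, ← LinearMap.comp_apply,
    ← LinearMap.comp_apply (TensorProduct.map LinearMap.id _),
    map_leftMul_comp_tensorTensorTensorComm hop,
    map_leftMul_sub_rightMul_comp_tensorTensorTensorComm hop, hβr, hτα]
  simp only [LinearMap.comp_apply, LinearMap.sub_apply, TensorProduct.map_tmul,
    map_d_dualTensor hsymm hinv hdual hΔ, map_flip_d_dualTensor hsymm hinv hdual hΔ,
    map_id_dualTensor hsymm hdual]
  have hflip : (l + r).flip a = l.flip a + r.flip a := rfl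
  simp only [tau2_tau2, hflip, LinearMap.add_apply, TensorProduct.map_add_left,
    TensorProduct.map_add_right, map_neg, map_add, map_sub, TensorProduct.tmul_add,
    TensorProduct.add_tmul, TensorProduct.tmul_neg, TensorProduct.neg_tmul]
  abel

/-- The pre-Lie coproduct on `L = A⊗B` obtained from the symmetric
S-equation solution `r_L` coincides with the one obtained from the pre-Novikov
bialgebra structure `(α_r, β_r)` induced by a symmetric p-NYBE solution `r`:
for all `a ∈ A`, `x ∈ B`,
`(L∘(a⊗x)⊗id + id⊗(L∘(a⊗x)−R∘(a⊗x)))(r_L) = β_r(a)•Δ(x) − τα_r(a)•τΔ(x)`. -/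
theorem coproducts_coincide (k A B ι σ : Type*) [Field k] [CharZero k]
    [AddCommGroup A] [Module k A] [AddCommGroup B] [Module k B]
    [Fintype ι] [DecidableEq ι] [Fintype σ]
    (l r : A →ₗ[k] A →ₗ[k] A) (hA : IsPreNovikov l r)
    (d : B →ₗ[k] B →ₗ[k] B) (bf : B →ₗ[k] B →ₗ[k] k)
    (hq : IsQuadraticRightNovikov d bf)
    (op : A ⊗[k] B →ₗ[k] A ⊗[k] B →ₗ[k] A ⊗[k] B)
    (hop : ∀ (a b : A) (x y : B),
      op (a ⊗ₜ[k] x) (b ⊗ₜ[k] y) = r a b ⊗ₜ[k] d x y - l b a ⊗ₜ[k] d y x)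
    (ρ : A ⊗[k] A) (xs ys : σ → A) (hρ : ρ = ∑ i : σ, xs i ⊗ₜ[k] ys i)
    (hsym : tau2 ρ = ρ) (hybe : IsPNYBESolution l r ρ)
    (αr βr : A →ₗ[k] A ⊗[k] A)
    (hαr : ∀ a : A, αr a = TensorProduct.map ((l + r) a) LinearMap.id (tau2 ρ)
        + TensorProduct.map LinearMap.id (r a + l.flip a) (tau2 ρ))
    (hβr : ∀ a : A, βr a = -(TensorProduct.map (r a) LinearMap.id ρ
        + TensorProduct.map LinearMap.id ((l + r) a + (l + r).flip a) ρ))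
    (e : Module.Basis ι k B) (f : ι → B)
    (hdual : ∀ p q : ι, bf (e p) (f q) = if p = q then (1:k) else 0)
    (rL : (A ⊗[k] B) ⊗[k] (A ⊗[k] B))
    (hrL : rL = ∑ p : ι, ∑ i : σ, (xs i ⊗ₜ[k] e p) ⊗ₜ[k] (ys i ⊗ₜ[k] f p))
    (Δ : B →ₗ[k] B ⊗[k] B)
    (hΔ : ∀ x y z : B,
      TensorProduct.lid k k (TensorProduct.map (bf.flip y) (bf.flip z) (Δ x))
        = bf x (d y z)) :
    ∀ (a : A) (x : B),
      TensorProduct.map (op (a ⊗ₜ[k] x)) LinearMap.id rL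
          + TensorProduct.map LinearMap.id
              (op (a ⊗ₜ[k] x) - op.flip (a ⊗ₜ[k] x)) rL
        = (TensorProduct.tensorTensorTensorComm k A A B B).toLinearMap
              (βr a ⊗ₜ[k] Δ x)
          - (TensorProduct.tensorTensorTensorComm k A A B B).toLinearMap
              (tau2 (αr a) ⊗ₜ[k] tau2 (Δ x)) :=
  coproducts_coincide_general k A B ι σ l r d bf hq op hop ρ xs ys hρ hsym αr βr hαr hβr e f hdual
    rL hrL Δ hΔ
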